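/- arXiv:1306.3178 — 4 statements merged into one kernel-verified Lean document; each statement's English description precedes it below -/
import Mathlib

section
/- Let f, g : 𝕋 → ℂ be bounded measurable functions on the circle 𝕋 = ℝ/2πℤ belonging to the Sobolev space H^{1/2}(𝕋). Then their product fg is in H^{1/2}(𝕋) and ‖fg‖_{H^{1/2}} ≤ C(‖f‖_{L^∞}·‖g‖_{H^{1/2}} + ‖g‖_{L^∞}·‖f‖_{H^{1/2}}) for an absolute constant C. -/
open scoped Real

instance : Fact (0 < 2 * π) := ⟨by positivity⟩

/-- The squared `H^{1/2}` Sobolev norm on the circle, via Fourier coefficients. -/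
noncomputable def sobolevHalfNormSq (f : AddCircle (2 * π) → ℂ) : ℝ :=
  ∑' n : ℤ, (1 + |n| : ℝ) * ‖fourierCoeff f n‖ ^ 2

/-!
Translating by `T / 2 ^ (m + 1)` multiplies the `n`-th Fourier coefficient by `exp (i n π / 2 ^ m)`.
By Parseval, the dyadic energy `‖f‖₂² + ∑ₘ 2 ^ m ‖f (· + T / 2 ^ (m + 1)) - f‖₂²` therefore equals
`∑ₙ (1 + Φ n) |f̂ n|²` with `Φ n = ∑ₘ 2 ^ m (2 - 2 cos (n π / 2 ^ m))`, and `2 |n| ≤ Φ n ≤ 28 |n|`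
(the terms with `2 ^ m` of the order of `|n|` dominate). So the dyadic energy is equivalent to the
squared `H^{1/2}` norm, and for the dyadic energy the product estimate is just the pointwise
Leibniz bound `|(fg)(x + t) - (fg)(x)| ≤ ‖f‖∞ |g(x + t) - g(x)| + ‖g‖∞ |f(x + t) - f(x)|`.
-/

open MeasureTheory AddCircle Real
open scoped ENNReal

theorem ENNReal.add_sq_le (a b : ℝ≥0∞) : (a + b) ^ 2 ≤ 2 * (a ^ 2 + b ^ 2) := by
  have h := ENNReal.rpow_add_le_mul_rpow_add_rpow a b one_le_two
  norm_num at h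
  exact_mod_cast h

theorem enorm_mul_sub_mul_sq_le {R : Type*} [NormedRing R] [NormMulClass R] {a b c d : R}
    {A B : ℝ≥0∞} (ha : ‖a‖ₑ ≤ A) (hd : ‖d‖ₑ ≤ B) :
    ‖a * b - c * d‖ₑ ^ 2 ≤ 2 * A ^ 2 * ‖b - d‖ₑ ^ 2 + 2 * B ^ 2 * ‖a - c‖ₑ ^ 2 := by
  have hsplit : a * b - c * d = a * (b - d) + (a - c) * d := by noncomm_ring
  calc ‖a * b - c * d‖ₑ ^ 2 ≤ (A * ‖b - d‖ₑ + ‖a - c‖ₑ * B) ^ 2 := by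
        rw [hsplit]
        gcongr
        refine (enorm_add_le _ _).trans (add_le_add ?_ ?_)
        · rw [enorm_mul]; exact mul_le_mul_left ha _
        · rw [enorm_mul]; exact mul_le_mul_right hd _
    _ ≤ 2 * ((A * ‖b - d‖ₑ) ^ 2 + (‖a - c‖ₑ * B) ^ 2) := ENNReal.add_sq_le _ _
    _ = 2 * A ^ 2 * ‖b - d‖ₑ ^ 2 + 2 * B ^ 2 * ‖a - c‖ₑ ^ 2 := by ring

theorem Nat.exists_le_two_pow_le_two_mul {k : ℕ} (hk : k ≠ 0) : ∃ m, k ≤ 2 ^ m ∧ 2 ^ m ≤ 2 * k :=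
  ⟨Nat.log 2 k + 1, (Nat.lt_pow_succ_log_self one_lt_two k).le, by
    rw [pow_succ']; exact Nat.mul_le_mul_left 2 (Nat.pow_log_le_self 2 hk)⟩

theorem exists_two_pow_mem_Icc_abs {n : ℤ} (hn : n ≠ 0) :
    ∃ m : ℕ, |(n : ℝ)| ≤ 2 ^ m ∧ (2 : ℝ) ^ m ≤ 2 * |(n : ℝ)| := by
  obtain ⟨m, hle, hge⟩ := Nat.exists_le_two_pow_le_two_mul (Int.natAbs_ne_zero.mpr hn)
  rw [← Int.cast_abs, Int.abs_eq_natAbs, Int.cast_natCast]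
  exact ⟨m, by exact_mod_cast hle, by exact_mod_cast hge⟩

noncomputable def dyadicWeight (n : ℤ) : ℝ := ∑' m : ℕ, 2 ^ m * (2 - 2 * cos (n * π / 2 ^ m))

theorem dyadicWeight_term_nonneg (n : ℤ) (m : ℕ) : 0 ≤ 2 ^ m * (2 - 2 * cos (n * π / 2 ^ m)) :=
  mul_nonneg (by positivity) (by linarith [cos_le_one (n * π / 2 ^ m)])

theorem dyadicWeight_term_le_four_mul (n : ℤ) (m : ℕ) :
    2 ^ m * (2 - 2 * cos (n * π / 2 ^ m)) ≤ 4 * 2 ^ m := by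
  nlinarith [neg_one_le_cos (n * π / 2 ^ m), pow_pos (two_pos : (0 : ℝ) < 2) m]

theorem dyadicWeight_term_le_geometric (n : ℤ) (m : ℕ) :
    2 ^ m * (2 - 2 * cos (n * π / 2 ^ m)) ≤ (n * π) ^ 2 * (1 / 2) ^ m := by
  have hcos := one_sub_sq_div_two_le_cos (x := n * π / 2 ^ m)
  calc 2 ^ m * (2 - 2 * cos (n * π / 2 ^ m)) ≤ 2 ^ m * (n * π / 2 ^ m) ^ 2 := by gcongr; linarith
    _ = (n * π) ^ 2 * (1 / 2) ^ m := by rw [one_div_pow]; field_simp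

theorem summable_dyadicWeight_term (n : ℤ) :
    Summable fun m : ℕ => 2 ^ m * (2 - 2 * cos (n * π / 2 ^ m)) :=
  .of_nonneg_of_le (dyadicWeight_term_nonneg n) (dyadicWeight_term_le_geometric n)
    (summable_geometric_two.mul_left _)

theorem dyadicWeight_nonneg (n : ℤ) : 0 ≤ dyadicWeight n :=
  tsum_nonneg (dyadicWeight_term_nonneg n)

theorem two_mul_abs_le_dyadicWeight (n : ℤ) : 2 * |(n : ℝ)| ≤ dyadicWeight n := by
  rcases eq_or_ne n 0 with rfl | hn
  · simpa using dyadicWeight_nonneg 0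
  obtain ⟨m, hle, hge⟩ := exists_two_pow_mem_Icc_abs hn
  have hpos : (0 : ℝ) < 2 ^ m := by positivity
  -- at the scale `2 ^ m ≈ |n|` the angle `|n| π / 2 ^ m` lies in `[π / 2, π]`
  have hcos : cos (n * π / 2 ^ m) ≤ 0 := by
    rw [← cos_abs, abs_div, abs_mul, abs_of_pos pi_pos, abs_of_pos hpos]
    apply cos_nonpos_of_pi_div_two_le_of_le
    · rw [le_div_iff₀ hpos]; nlinarith [pi_pos]
    · rw [div_le_iff₀ hpos]; nlinarith [pi_pos]
  calc 2 * |(n : ℝ)| ≤ 2 ^ m * (2 - 2 * cos (n * π / 2 ^ m)) := by nlinarith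
    _ ≤ dyadicWeight n :=
      (summable_dyadicWeight_term n).le_tsum m fun k _ => dyadicWeight_term_nonneg n k

theorem dyadicWeight_le (n : ℤ) : dyadicWeight n ≤ 28 * |(n : ℝ)| := by
  rcases eq_or_ne n 0 with rfl | hn
  · simp [dyadicWeight]
  obtain ⟨m₀, hle, hge⟩ := exists_two_pow_mem_Icc_abs hn
  have hhead : ∑ m ∈ Finset.range m₀, 2 ^ m * (2 - 2 * cos (n * π / 2 ^ m)) ≤ 8 * |(n : ℝ)| :=
    calc ∑ m ∈ Finset.range m₀, 2 ^ m * (2 - 2 * cos (n * π / 2 ^ m))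
        ≤ ∑ m ∈ Finset.range m₀, 4 * (2 : ℝ) ^ m :=
          Finset.sum_le_sum fun m _ => dyadicWeight_term_le_four_mul n m
      _ = 4 * (2 ^ m₀ - 1) := by
          rw [← Finset.mul_sum, geom_sum_eq (by norm_num : (2 : ℝ) ≠ 1)]; norm_num
      _ ≤ 8 * |(n : ℝ)| := by linarith
  have htail : ∑' m, 2 ^ (m + m₀) * (2 - 2 * cos (n * π / 2 ^ (m + m₀))) ≤ 20 * |(n : ℝ)| :=
    calc ∑' m, 2 ^ (m + m₀) * (2 - 2 * cos (n * π / 2 ^ (m + m₀)))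
        ≤ ∑' m, (n * π) ^ 2 * (1 / 2) ^ m₀ * (1 / 2) ^ m :=
          ((summable_nat_add_iff m₀).mpr (summable_dyadicWeight_term n)).tsum_le_tsum
            (fun m => by
              rw [mul_assoc, ← pow_add, add_comm m₀]; exact dyadicWeight_term_le_geometric n _)
            (summable_geometric_two.mul_left _)
      _ = 2 * π ^ 2 * (n ^ 2 / 2 ^ m₀) := by
          rw [tsum_mul_left, tsum_geometric_two, one_div_pow]; field_simp
      _ ≤ 2 * π ^ 2 * |(n : ℝ)| := by
          gcongr
          rw [div_le_iff₀ (by positivity), ← sq_abs]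
          nlinarith [abs_nonneg (n : ℝ)]
      _ ≤ 20 * |(n : ℝ)| := by
          gcongr; nlinarith [pi_lt_d2, pi_pos]
  rw [dyadicWeight, ← (summable_dyadicWeight_term n).sum_add_tsum_nat_add m₀]
  linarith

theorem fourier_add_apply {T : ℝ} (n : ℤ) (x y : AddCircle T) :
    fourier n (x + y) = fourier n x * fourier n y := by
  simp only [fourier_apply, smul_add, toCircle_add, Circle.coe_mul]

section Circle

variable {T : ℝ} [Fact (0 < T)]

theorem fourierCoeff_comp_add_right {E : Type*} [NormedAddCommGroup E] [NormedSpace ℂ E]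
    (f : AddCircle T → E) (t : AddCircle T) (n : ℤ) :
    fourierCoeff (fun x => f (x + t)) n = fourier n t • fourierCoeff f n := by
  have hshift := integral_add_right_eq_self (μ := haarAddCircle)
    (fun y => fourier (-n) (y - t) • f y) t
  simp only [add_sub_cancel_right] at hshift
  rw [fourierCoeff, hshift, fourierCoeff, ← integral_smul]
  congr 1 with y
  rw [sub_eq_add_neg, fourier_add_apply, mul_smul, smul_comm, fourier_apply (n := -n),
    fourier_apply (n := n), neg_smul, smul_neg, neg_neg]

theorem fourierCoeff_comp_add_right_sub {f : AddCircle T → ℂ} (hf : Integrable f haarAddCircle)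
    (t : AddCircle T) (n : ℤ) :
    fourierCoeff (fun x => f (x + t) - f x) n = (fourier n t - 1) * fourierCoeff f n := by
  have hsplit : (fun x => f (x + t) - f x) = (fun x => f (x + t)) + (-1 : ℂ) • f := by
    ext x; simp [sub_eq_add_neg]
  rw [hsplit, fourierCoeff.add (hf.comp_add_right t) (hf.smul _), Pi.add_apply,
    fourierCoeff.const_smul, fourierCoeff_comp_add_right, smul_eq_mul, smul_eq_mul]
  ring

theorem hasSum_sq_fourierCoeff_of_memLp {f : AddCircle T → ℂ} (hf : MemLp f 2 haarAddCircle) :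
    HasSum (fun n => ‖fourierCoeff f n‖ ^ 2) (∫ x, ‖f x‖ ^ 2 ∂haarAddCircle) := by
  have h := hasSum_sq_fourierCoeff hf.toLp
  rwa [fourierCoeff_congr_ae hf.coeFn_toLp,
    integral_congr_ae (g := fun x => ‖f x‖ ^ 2) (hf.coeFn_toLp.mono fun x hx => by simp only [hx])]
    at h

theorem tsum_enorm_fourierCoeff_sq {f : AddCircle T → ℂ} (hf : MemLp f 2 haarAddCircle) :
    ∑' n, ‖fourierCoeff f n‖ₑ ^ 2 = ∫⁻ x, ‖f x‖ₑ ^ 2 ∂haarAddCircle := by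
  have h := hasSum_sq_fourierCoeff_of_memLp hf
  simp_rw [← ofReal_norm, ← ENNReal.ofReal_pow (norm_nonneg _)]
  rw [← ENNReal.ofReal_tsum_of_nonneg (fun n => by positivity) h.summable, h.tsum_eq,
    ofReal_integral_eq_lintegral_ofReal (hf.integrable_norm_pow' (p := 2))
      (ae_of_all _ fun x => by positivity)]

noncomputable def dyadicShift (m : ℕ) : AddCircle T := ((T / 2 ^ (m + 1) : ℝ) : AddCircle T)

theorem norm_fourier_dyadicShift_sub_one_sq (n : ℤ) (m : ℕ) :
    ‖fourier n (dyadicShift m : AddCircle T) - 1‖ ^ 2 = 2 - 2 * cos (n * π / 2 ^ m) := by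
  have hT : (T : ℂ) ≠ 0 := Complex.ofReal_ne_zero.mpr (Fact.out : 0 < T).ne'
  have hexp : fourier n (dyadicShift m : AddCircle T) =
      Complex.exp (Complex.I * ↑(n * π / 2 ^ m)) := by
    rw [dyadicShift, fourier_coe_apply]
    congr 1
    push_cast
    field_simp
    ring
  rw [hexp, Complex.norm_exp_I_mul_ofReal_sub_one]
  simp only [Real.norm_eq_abs, abs_mul, mul_pow, sq_abs]
  rw [sin_sq_eq_half_sub, mul_div_cancel₀ _ two_ne_zero]
  ring

noncomputable def dyadicEnergy (f : AddCircle T → ℂ) : ℝ≥0∞ :=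
  ∫⁻ x, ‖f x‖ₑ ^ 2 ∂haarAddCircle +
    ∑' m : ℕ, 2 ^ m * ∫⁻ x, ‖f (x + dyadicShift m) - f x‖ₑ ^ 2 ∂haarAddCircle

theorem lintegral_enorm_sub_dyadicShift_sq {f : AddCircle T → ℂ} (hf : MemLp f 2 haarAddCircle)
    (m : ℕ) :
    ∫⁻ x, ‖f (x + dyadicShift m) - f x‖ₑ ^ 2 ∂haarAddCircle =
      ∑' n : ℤ, ENNReal.ofReal (2 - 2 * cos (n * π / 2 ^ m)) * ‖fourierCoeff f n‖ₑ ^ 2 := by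
  have hdiff : MemLp (fun x => f (x + dyadicShift m) - f x) 2 haarAddCircle :=
    (hf.comp_measurePreserving (measurePreserving_add_right _ _)).sub hf
  rw [← tsum_enorm_fourierCoeff_sq hdiff]
  refine tsum_congr fun n => ?_
  rw [fourierCoeff_comp_add_right_sub (hf.integrable one_le_two), enorm_mul, mul_pow,
    ← norm_fourier_dyadicShift_sub_one_sq (T := T), ENNReal.ofReal_pow (norm_nonneg _), ofReal_norm]

theorem tsum_two_pow_mul_ofReal_eq_dyadicWeight (n : ℤ) :
    ∑' m : ℕ, 2 ^ m * ENNReal.ofReal (2 - 2 * cos (n * π / 2 ^ m)) =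
      ENNReal.ofReal (dyadicWeight n) := by
  rw [dyadicWeight, ENNReal.ofReal_tsum_of_nonneg (dyadicWeight_term_nonneg n)
    (summable_dyadicWeight_term n)]
  refine tsum_congr fun m => ?_
  rw [ENNReal.ofReal_mul (by positivity), ENNReal.ofReal_pow zero_le_two, ENNReal.ofReal_ofNat]

theorem dyadicEnergy_eq_tsum {f : AddCircle T → ℂ} (hf : MemLp f 2 haarAddCircle) :
    dyadicEnergy f =
      ∑' n : ℤ, ENNReal.ofReal (1 + dyadicWeight n) * ‖fourierCoeff f n‖ₑ ^ 2 := by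
  rw [dyadicEnergy, ← tsum_enorm_fourierCoeff_sq hf]
  simp_rw [lintegral_enorm_sub_dyadicShift_sq hf, ← ENNReal.tsum_mul_left]
  rw [ENNReal.tsum_comm, ← ENNReal.tsum_add]
  refine tsum_congr fun n => ?_
  simp_rw [← mul_assoc]
  rw [ENNReal.tsum_mul_right, tsum_two_pow_mul_ofReal_eq_dyadicWeight,
    ENNReal.ofReal_add zero_le_one (dyadicWeight_nonneg n), ENNReal.ofReal_one, add_mul, one_mul]

/-- Valued in `ℝ≥0∞`, so that it is meaningful before the series is known to converge
(a divergent real `tsum` is `0`). -/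
noncomputable def sobolevHalfENormSq (f : AddCircle T → ℂ) : ℝ≥0∞ :=
  ∑' n : ℤ, ENNReal.ofReal (1 + |(n : ℝ)|) * ‖fourierCoeff f n‖ₑ ^ 2

theorem sobolevHalfENormSq_le_dyadicEnergy {f : AddCircle T → ℂ} (hf : MemLp f 2 haarAddCircle) :
    sobolevHalfENormSq f ≤ dyadicEnergy f := by
  rw [dyadicEnergy_eq_tsum hf]
  refine ENNReal.tsum_le_tsum fun n => mul_le_mul_left (ENNReal.ofReal_le_ofReal ?_) _
  linarith [two_mul_abs_le_dyadicWeight n, abs_nonneg (n : ℝ)]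

theorem dyadicEnergy_le_sobolevHalfENormSq {f : AddCircle T → ℂ} (hf : MemLp f 2 haarAddCircle) :
    dyadicEnergy f ≤ 28 * sobolevHalfENormSq f := by
  rw [dyadicEnergy_eq_tsum hf, sobolevHalfENormSq, ← ENNReal.tsum_mul_left]
  refine ENNReal.tsum_le_tsum fun n => ?_
  rw [← mul_assoc, ← ENNReal.ofReal_ofNat 28, ← ENNReal.ofReal_mul (by norm_num)]
  exact mul_le_mul_left (ENNReal.ofReal_le_ofReal (by linarith [dyadicWeight_le n])) _

theorem dyadicEnergy_mul_le {f g : AddCircle T → ℂ} (hf : Measurable f) (hg : Measurable g)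
    {A B : ℝ≥0∞} (hfA : ∀ x, ‖f x‖ₑ ≤ A) (hgB : ∀ x, ‖g x‖ₑ ≤ B) :
    dyadicEnergy (fun x => f x * g x) ≤
      2 * A ^ 2 * dyadicEnergy g + 2 * B ^ 2 * dyadicEnergy f := by
  have hmeas : ∀ {h : AddCircle T → ℂ}, Measurable h → ∀ m : ℕ,
      Measurable fun x => ‖h (x + dyadicShift m) - h x‖ₑ ^ 2 := fun hh m =>
    ((hh.comp (measurable_add_const _)).sub hh).enorm.pow_const 2
  have hL2 : ∫⁻ x, ‖f x * g x‖ₑ ^ 2 ∂haarAddCircle ≤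
      2 * A ^ 2 * ∫⁻ x, ‖g x‖ₑ ^ 2 ∂haarAddCircle := by
    rw [← lintegral_const_mul _ (hg.enorm.pow_const 2)]
    refine lintegral_mono fun x => ?_
    calc ‖f x * g x‖ₑ ^ 2 ≤ 1 * A ^ 2 * ‖g x‖ₑ ^ 2 := by
          rw [enorm_mul, mul_pow, one_mul]; gcongr; exact hfA x
      _ ≤ 2 * A ^ 2 * ‖g x‖ₑ ^ 2 := by gcongr; norm_num
  have hdiff : ∀ m : ℕ,
      ∫⁻ x, ‖f (x + dyadicShift m) * g (x + dyadicShift m) - f x * g x‖ₑ ^ 2 ∂haarAddCircle ≤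
        2 * A ^ 2 * ∫⁻ x, ‖g (x + dyadicShift m) - g x‖ₑ ^ 2 ∂haarAddCircle +
          2 * B ^ 2 * ∫⁻ x, ‖f (x + dyadicShift m) - f x‖ₑ ^ 2 ∂haarAddCircle := fun m => by
    rw [← lintegral_const_mul _ (hmeas hg m), ← lintegral_const_mul _ (hmeas hf m),
      ← lintegral_add_left ((hmeas hg m).const_mul _)]
    exact lintegral_mono fun x => enorm_mul_sub_mul_sq_le (hfA _) (hgB _)
  simp only [dyadicEnergy]
  calc _ ≤ 2 * A ^ 2 * ∫⁻ x, ‖g x‖ₑ ^ 2 ∂haarAddCircle +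
        ∑' m : ℕ, 2 ^ m * (2 * A ^ 2 * ∫⁻ x, ‖g (x + dyadicShift m) - g x‖ₑ ^ 2 ∂haarAddCircle +
          2 * B ^ 2 * ∫⁻ x, ‖f (x + dyadicShift m) - f x‖ₑ ^ 2 ∂haarAddCircle) :=
        add_le_add hL2 (ENNReal.tsum_le_tsum fun m => mul_le_mul_right (hdiff m) _)
    _ = 2 * A ^ 2 * (∫⁻ x, ‖g x‖ₑ ^ 2 ∂haarAddCircle +
          ∑' m : ℕ, 2 ^ m * ∫⁻ x, ‖g (x + dyadicShift m) - g x‖ₑ ^ 2 ∂haarAddCircle) +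
        2 * B ^ 2 * ∑' m : ℕ, 2 ^ m * ∫⁻ x, ‖f (x + dyadicShift m) - f x‖ₑ ^ 2 ∂haarAddCircle := by
      simp_rw [mul_add, ENNReal.tsum_add, mul_left_comm ((2 : ℝ≥0∞) ^ _), ENNReal.tsum_mul_left]
      ring
    _ ≤ _ := by gcongr; exact le_add_self

theorem sobolevHalfENormSq_mul_le {f g : AddCircle T → ℂ} (hf : Measurable f) (hg : Measurable g)
    {Mf Mg : ℝ} (hfM : ∀ x, ‖f x‖ ≤ Mf) (hgM : ∀ x, ‖g x‖ ≤ Mg) :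
    sobolevHalfENormSq (fun x => f x * g x) ≤
      56 * (ENNReal.ofReal Mf ^ 2 * sobolevHalfENormSq g +
        ENNReal.ofReal Mg ^ 2 * sobolevHalfENormSq f) := by
  have hfgM : ∀ x, ‖f x * g x‖ ≤ Mf * Mg := fun x => by
    rw [norm_mul]; exact mul_le_mul (hfM x) (hgM x) (norm_nonneg _) ((norm_nonneg _).trans (hfM x))
  calc sobolevHalfENormSq (fun x => f x * g x) ≤ dyadicEnergy (fun x => f x * g x) :=
        sobolevHalfENormSq_le_dyadicEnergy
          (.of_bound (hf.mul hg).aestronglyMeasurable _ (ae_of_all _ hfgM))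
    _ ≤ 2 * ENNReal.ofReal Mf ^ 2 * dyadicEnergy g + 2 * ENNReal.ofReal Mg ^ 2 * dyadicEnergy f :=
        dyadicEnergy_mul_le hf hg (fun x => ofReal_norm (f x) ▸ ENNReal.ofReal_le_ofReal (hfM x))
          (fun x => ofReal_norm (g x) ▸ ENNReal.ofReal_le_ofReal (hgM x))
    _ ≤ 2 * ENNReal.ofReal Mf ^ 2 * (28 * sobolevHalfENormSq g) +
          2 * ENNReal.ofReal Mg ^ 2 * (28 * sobolevHalfENormSq f) := by
        gcongr
        · exact dyadicEnergy_le_sobolevHalfENormSq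
            (.of_bound hg.aestronglyMeasurable _ (ae_of_all _ hgM))
        · exact dyadicEnergy_le_sobolevHalfENormSq
            (.of_bound hf.aestronglyMeasurable _ (ae_of_all _ hfM))
    _ = _ := by ring

theorem sobolevHalfENormSq_eq_tsum_ofReal (f : AddCircle T → ℂ) :
    sobolevHalfENormSq f = ∑' n : ℤ, ENNReal.ofReal ((1 + |n| : ℝ) * ‖fourierCoeff f n‖ ^ 2) := by
  refine tsum_congr fun n => ?_
  rw [ENNReal.ofReal_mul (by positivity), ENNReal.ofReal_pow (norm_nonneg _), ofReal_norm,
    Int.cast_abs]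

end Circle

theorem sobolevHalfNormSq_eq_toReal (f : AddCircle (2 * π) → ℂ) :
    sobolevHalfNormSq f = (sobolevHalfENormSq f).toReal := by
  rw [sobolevHalfENormSq_eq_tsum_ofReal, ENNReal.tsum_toReal_eq fun _ => ENNReal.ofReal_ne_top]
  exact tsum_congr fun n => (ENNReal.toReal_ofReal (by positivity)).symm

theorem ofReal_sobolevHalfNormSq {f : AddCircle (2 * π) → ℂ}
    (hf : Summable fun n : ℤ => (1 + |n| : ℝ) * ‖fourierCoeff f n‖ ^ 2) :
    ENNReal.ofReal (sobolevHalfNormSq f) = sobolevHalfENormSq f := by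
  rw [sobolevHalfNormSq, ENNReal.ofReal_tsum_of_nonneg (fun n => by positivity) hf,
    sobolevHalfENormSq_eq_tsum_ofReal]

theorem summable_of_sobolevHalfENormSq_ne_top {f : AddCircle (2 * π) → ℂ}
    (hf : sobolevHalfENormSq f ≠ ⊤) :
    Summable fun n : ℤ => (1 + |n| : ℝ) * ‖fourierCoeff f n‖ ^ 2 := by
  rw [sobolevHalfENormSq_eq_tsum_ofReal] at hf
  exact (ENNReal.summable_toReal hf).congr fun n => ENNReal.toReal_ofReal (by positivity)

theorem stmt_4 :
    ∃ C > 0, ∀ (f g : AddCircle (2 * π) → ℂ) (Mf Mg : ℝ),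
      Measurable f → Measurable g →
      (∀ x, ‖f x‖ ≤ Mf) → (∀ x, ‖g x‖ ≤ Mg) →
      Summable (fun n : ℤ => (1 + |n| : ℝ) * ‖fourierCoeff f n‖ ^ 2) →
      Summable (fun n : ℤ => (1 + |n| : ℝ) * ‖fourierCoeff g n‖ ^ 2) →
      Summable (fun n : ℤ => (1 + |n| : ℝ) * ‖fourierCoeff (fun x => f x * g x) n‖ ^ 2) ∧
      Real.sqrt (sobolevHalfNormSq (fun x => f x * g x)) ≤
        C * (Mf * Real.sqrt (sobolevHalfNormSq g) + Mg * Real.sqrt (sobolevHalfNormSq f)) := by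
  refine ⟨8, by norm_num, fun f g Mf Mg hf hg hfM hgM hsf hsg => ?_⟩
  have hMf : 0 ≤ Mf := (norm_nonneg _).trans (hfM 0)
  have hMg : 0 ≤ Mg := (norm_nonneg _).trans (hgM 0)
  set Sf := sobolevHalfNormSq f
  set Sg := sobolevHalfNormSq g
  have hSf : 0 ≤ Sf := tsum_nonneg fun n => by positivity
  have hSg : 0 ≤ Sg := tsum_nonneg fun n => by positivity
  have key : sobolevHalfENormSq (fun x => f x * g x) ≤
      ENNReal.ofReal (56 * ((Mf * √Sg) ^ 2 + (Mg * √Sf) ^ 2)) := by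
    refine (sobolevHalfENormSq_mul_le hf hg hfM hgM).trans_eq ?_
    rw [← ofReal_sobolevHalfNormSq hsf, ← ofReal_sobolevHalfNormSq hsg, mul_pow, mul_pow,
      Real.sq_sqrt hSf, Real.sq_sqrt hSg, ENNReal.ofReal_mul (by norm_num),
      ENNReal.ofReal_add (by positivity) (by positivity), ENNReal.ofReal_mul (by positivity),
      ENNReal.ofReal_mul (by positivity), ENNReal.ofReal_pow hMf, ENNReal.ofReal_pow hMg,
      ENNReal.ofReal_ofNat]
  refine ⟨summable_of_sobolevHalfENormSq_ne_top (ne_top_of_le_ne_top ENNReal.ofReal_ne_top key), ?_⟩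
  rw [Real.sqrt_le_left (by positivity), sobolevHalfNormSq_eq_toReal]
  refine (ENNReal.toReal_le_of_le_ofReal (by positivity) key).trans ?_
  nlinarith [mul_nonneg hMf (Real.sqrt_nonneg Sg), mul_nonneg hMg (Real.sqrt_nonneg Sf)]
end

section
/- For every integer N ≥ 2 and every square-summable sequence (v_α)_{α≥1} of nonnegative reals, the double sum T₁ = ∑_{|m|≤N} ∑_{n>N} v_{n-m}²/(n² - m²) satisfies T₁ ≤ C·(log N / N)·∑_{α≥1} v_α² for an absolute constant C. -/
/-!
Substitute `α = n - m`, so that `n² - m² = α (α + 2m)`, and swap the finite sum over `m` with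
the sum over `α`. The claim reduces to bounding, for each `α ≥ 1`, the weight
`∑_{|m| ≤ N, α + m > N} 1 / (α (α + 2m))` by `5 log N / N`. For `α ≤ N` there are `α` terms, each
at most `1 / (α (N + 2))`. For `α > N` the factor `1/α` is at most `1/N`, and the remaining sum is
dominated by the harmonic number `H_{2N+1} ≤ 1 + log (2N + 1)`.
-/

open Finset Real

lemma sum_Icc_inv_add_le_one_add_log (N : ℕ) :
    ∑ m ∈ Icc (-(N : ℤ)) N, (((m + N + 1 : ℤ) : ℝ))⁻¹ ≤ 1 + log (2 * N + 1) := by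
  have hharm : ∑ m ∈ Icc (-(N : ℤ)) N, (((m + N + 1 : ℤ) : ℝ))⁻¹ = harmonic (2 * N + 1) := by
    rw [harmonic, Rat.cast_sum]
    refine sum_nbij' (fun m => (m + N).toNat) (fun i => (i : ℤ) - N) ?_ ?_ ?_ ?_ ?_ <;>
      intro a ha <;> simp only [mem_Icc, mem_range] at ha ⊢
    any_goals omega
    have hcast : (((a + N).toNat : ℕ) : ℝ) = a + N := by
      exact_mod_cast Int.toNat_of_nonneg (show 0 ≤ a + N by omega)
    push_cast
    rw [hcast]
  rw [hharm]
  exact_mod_cast harmonic_le_one_add_log (2 * N + 1)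

lemma one_le_two_mul_log {x : ℝ} (hx : 2 ≤ x) : 1 ≤ 2 * log x := by
  have := log_le_log two_pos hx
  linarith [log_two_gt_d9]

lemma one_add_log_two_mul_add_one_le {x : ℝ} (hx : 2 ≤ x) :
    1 + log (2 * x + 1) ≤ 5 * log x := by
  have hcube : 2 * x + 1 ≤ x ^ 3 := by
    nlinarith [mul_nonneg (sub_nonneg.2 hx) (sq_nonneg (x + 1))]
  have := log_le_log (by linarith) hcube
  rw [log_pow] at this
  push_cast at this
  linarith [one_le_two_mul_log hx]

/-- `1 / (n² - m²)` at `n = α + m`, restricted to `n > N`. -/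
noncomputable def tailKernel (N : ℕ) (m α : ℤ) : ℝ :=
  if (N : ℤ) < α + m then ((α : ℝ) * (α + 2 * m))⁻¹ else 0

section tailKernel

variable {N : ℕ} {m α : ℤ}

lemma tailKernel_nonneg_le_one (hm : m ∈ Icc (-(N : ℤ)) N) (α : ℤ) :
    0 ≤ tailKernel N m α ∧ tailKernel N m α ≤ 1 := by
  rw [mem_Icc] at hm
  unfold tailKernel
  split_ifs with h
  · have hden : (1 : ℝ) ≤ α * (α + 2 * m) := by
      exact_mod_cast one_le_mul_of_one_le_of_one_le (by omega : (1 : ℤ) ≤ α) (by omega)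
    exact ⟨by positivity, inv_le_one_of_one_le₀ hden⟩
  · simp

lemma tailKernel_eq_zero (hα : α ≤ 0) (hm : m ≤ N) : tailKernel N m α = 0 :=
  if_neg (by omega)

/-- On the support `N < α + m`, so `α + 2m = (α + m) + m ≥ m + N + 1`. -/
lemma tailKernel_le_inv_mul_inv (hm : -(N : ℤ) ≤ m) (hα : 1 ≤ α) :
    tailKernel N m α ≤ (α : ℝ)⁻¹ * (((m + N + 1 : ℤ) : ℝ))⁻¹ := by
  unfold tailKernel
  split_ifs with h
  · rw [mul_inv]
    gcongr
    · exact_mod_cast (show 0 < m + N + 1 by omega)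
    · exact_mod_cast (show m + N + 1 ≤ α + 2 * m by omega)
  · have : (0 : ℝ) < α := by exact_mod_cast hα
    have : (0 : ℝ) < ((m + N + 1 : ℤ) : ℝ) := by exact_mod_cast (show 0 < m + N + 1 by omega)
    positivity

lemma sum_tailKernel_le_of_lt (hN : 2 ≤ N) (hα : (N : ℤ) < α) :
    ∑ m ∈ Icc (-(N : ℤ)) N, tailKernel N m α ≤ 5 * (log N / N) := by
  have hN' : (2 : ℝ) ≤ N := by exact_mod_cast hN
  have hαN : (N : ℝ) ≤ α := by exact_mod_cast hα.le
  calc ∑ m ∈ Icc (-(N : ℤ)) N, tailKernel N m α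
      ≤ ∑ m ∈ Icc (-(N : ℤ)) N, (α : ℝ)⁻¹ * (((m + N + 1 : ℤ) : ℝ))⁻¹ :=
        sum_le_sum fun m hm => tailKernel_le_inv_mul_inv (mem_Icc.1 hm).1 (by omega)
    _ = (α : ℝ)⁻¹ * ∑ m ∈ Icc (-(N : ℤ)) N, (((m + N + 1 : ℤ) : ℝ))⁻¹ := (mul_sum ..).symm
    _ ≤ (N : ℝ)⁻¹ * (5 * log N) := by
        refine mul_le_mul (inv_anti₀ (by positivity) hαN)
          ((sum_Icc_inv_add_le_one_add_log N).trans (one_add_log_two_mul_add_one_le hN'))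
          (sum_nonneg fun m hm => ?_) (by positivity)
        have := (mem_Icc.1 hm).1
        exact inv_nonneg.2 (by exact_mod_cast (show 0 ≤ m + N + 1 by omega))
    _ = 5 * (log N / N) := by ring

/-- For `α ≤ N` exactly `α` values of `m` are in the support, each with `α + 2m ≥ N + 2`. -/
lemma sum_tailKernel_le_of_le (hN : 2 ≤ N) (h1 : 1 ≤ α) (hα : α ≤ N) :
    ∑ m ∈ Icc (-(N : ℤ)) N, tailKernel N m α ≤ 5 * (log N / N) := by
  have hN' : (2 : ℝ) ≤ N := by exact_mod_cast hN
  have hα' : (0 : ℝ) < α := by exact_mod_cast h1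
  have hsupp : {m ∈ Icc (-(N : ℤ)) N | (N : ℤ) < α + m} = Icc (N + 1 - α) N := by
    ext m
    simp only [mem_filter, mem_Icc]
    omega
  have hcard : (#(Icc ((N : ℤ) + 1 - α) N) : ℝ) = α := by
    rw [Int.card_Icc, show (N : ℤ) + 1 - (N + 1 - α) = α by ring]
    exact_mod_cast Int.toNat_of_nonneg (by omega)
  calc ∑ m ∈ Icc (-(N : ℤ)) N, tailKernel N m α
      = ∑ m ∈ Icc ((N : ℤ) + 1 - α) N, ((α : ℝ) * (α + 2 * m))⁻¹ := by
        rw [← hsupp, sum_filter]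
        rfl
    _ ≤ #(Icc ((N : ℤ) + 1 - α) N) • ((α : ℝ) * (N + 2))⁻¹ := by
        refine sum_le_card_nsmul _ _ _ fun m hm => ?_
        rw [mem_Icc] at hm
        refine inv_anti₀ (by positivity) (mul_le_mul_of_nonneg_left ?_ hα'.le)
        exact_mod_cast (show (N : ℤ) + 2 ≤ α + 2 * m by omega)
    _ = ((N : ℝ) + 2)⁻¹ := by
        rw [nsmul_eq_mul, hcard]
        field_simp
    _ ≤ (N : ℝ)⁻¹ := inv_anti₀ (by positivity) (by linarith)
    _ ≤ 5 * (log N / N) := by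
        rw [inv_eq_one_div, mul_div_assoc']
        gcongr
        linarith [one_le_two_mul_log hN']


lemma sum_tailKernel_le (hN : 2 ≤ N) (hα : 1 ≤ α) :
    ∑ m ∈ Icc (-(N : ℤ)) N, tailKernel N m α ≤ 5 * (log N / N) := by
  rcases le_or_gt α N with h | h
  · exact sum_tailKernel_le_of_le hN hα h
  · exact sum_tailKernel_le_of_lt hN h

lemma sum_sq_mul_tailKernel_le (hN : 2 ≤ N) (v : ℤ → ℝ) (α : ℤ) :
    ∑ m ∈ Icc (-(N : ℤ)) N, v α ^ 2 * tailKernel N m α ≤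
      5 * (log N / N) * {α : ℤ | 1 ≤ α}.indicator (fun α => v α ^ 2) α := by
  rw [← mul_sum]
  by_cases hα : 1 ≤ α
  · rw [Set.indicator_of_mem (show α ∈ {α : ℤ | 1 ≤ α} from hα), mul_comm _ (v α ^ 2)]
    exact mul_le_mul_of_nonneg_left (sum_tailKernel_le hN hα) (sq_nonneg _)
  · rw [Set.indicator_of_notMem (by simpa using hα), sum_eq_zero fun m hm =>
      tailKernel_eq_zero (by omega) (mem_Icc.1 hm).2]
    simp

lemma summable_sq_mul_tailKernel {v : ℤ → ℝ} (hv : Summable fun α => v α ^ 2)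
    (hm : m ∈ Icc (-(N : ℤ)) N) : Summable fun α => v α ^ 2 * tailKernel N m α :=
  hv.of_nonneg_of_le (fun α => mul_nonneg (sq_nonneg _) (tailKernel_nonneg_le_one hm α).1)
    fun α => mul_le_of_le_one_right (sq_nonneg _) (tailKernel_nonneg_le_one hm α).2

/-- The substitution `n = α + m`, under which `n² - m² = α (α + 2m)`. -/
lemma tsum_gt_eq_tsum_sq_mul_tailKernel (v : ℤ → ℝ) (m : ℤ) :
    ∑' n : {n : ℤ // (N : ℤ) < n}, v (n - m) ^ 2 / ((n : ℝ) ^ 2 - (m : ℝ) ^ 2) =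
      ∑' α : ℤ, v α ^ 2 * tailKernel N m α := by
  refine (_root_.tsum_subtype {n : ℤ | (N : ℤ) < n}
    fun n => v (n - m) ^ 2 / ((n : ℝ) ^ 2 - (m : ℝ) ^ 2)).trans ?_
  rw [← (Equiv.addRight m).tsum_eq]
  refine tsum_congr fun α => ?_
  simp only [Equiv.coe_addRight, Set.indicator_apply, Set.mem_ofPred_eq, tailKernel, mul_ite,
    mul_zero, add_sub_cancel_right]
  congr 1
  rw [div_eq_mul_inv]
  push_cast
  ring

end tailKernel

theorem stmt_6 :
    ∃ C > 0, ∀ (N : ℕ), 2 ≤ N → ∀ v : ℤ → ℝ,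
      (∀ α : ℤ, 0 ≤ v α) → Summable (fun α : ℤ => v α ^ 2) →
      ∑ m ∈ Finset.Icc (-(N : ℤ)) (N : ℤ),
          ∑' n : {n : ℤ // (N : ℤ) < n}, v ((n : ℤ) - m) ^ 2 / (((n : ℤ) : ℝ) ^ 2 - (m : ℝ) ^ 2) ≤
        C * (Real.log N / N) * ∑' α : {α : ℤ // 1 ≤ α}, v (α : ℤ) ^ 2 := by
  refine ⟨5, by norm_num, fun N hN v _ hv => ?_⟩
  have hsumm := fun m (hm : m ∈ Icc (-(N : ℤ)) N) => summable_sq_mul_tailKernel hv hm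
  calc ∑ m ∈ Icc (-(N : ℤ)) N,
          ∑' n : {n : ℤ // (N : ℤ) < n}, v (n - m) ^ 2 / ((n : ℝ) ^ 2 - (m : ℝ) ^ 2)
      = ∑' α : ℤ, ∑ m ∈ Icc (-(N : ℤ)) N, v α ^ 2 * tailKernel N m α := by
        simp only [tsum_gt_eq_tsum_sq_mul_tailKernel, Summable.tsum_finsetSum hsumm]
    _ ≤ ∑' α : ℤ, 5 * (log N / N) * {α : ℤ | 1 ≤ α}.indicator (fun α => v α ^ 2) α :=
        (summable_sum hsumm).tsum_le_tsum (sum_sq_mul_tailKernel_le hN v)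
          ((hv.indicator _).mul_left _)
    _ = 5 * (log N / N) * ∑' α : {α : ℤ // 1 ≤ α}, v α ^ 2 := by
        rw [tsum_mul_left, ← _root_.tsum_subtype]
        rfl
end

section
/- For every square-summable sequence (v_α)_{α≥1} of nonnegative reals, ∑_{N=1}^∞ ∑_{α=N}^{3N} (v_α²/α)·log((2N+α)/(|2N-α|+1)) ≤ C·∑_{α=1}^∞ v_α² for an absolute constant C. -/
open Real Finset

-- ∑_{k=0}^{n} 1/√(k+1) ≤ 2√(n+1)
lemma aux_sum_rsqrt (n : ℕ) :
    ∑ k ∈ Finset.range (n + 1), (1 / Real.sqrt ((k : ℝ) + 1)) ≤ 2 * Real.sqrt ((n : ℝ) + 1) := by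
  induction n with
  | zero =>
    simp only [Finset.range_one, Finset.sum_singleton, Nat.cast_zero, zero_add]
    rw [Real.sqrt_one]
    norm_num
  | succ n ih =>
    rw [Finset.sum_range_succ]
    have ha : (1 : ℝ) ≤ Real.sqrt ((n : ℝ) + 1) := by
      have h1 : Real.sqrt ((n : ℝ) + 1) ^ 2 = (n : ℝ) + 1 := Real.sq_sqrt (by positivity)
      nlinarith [Real.sqrt_nonneg ((n : ℝ) + 1), Nat.cast_nonneg (α := ℝ) n]
    have hb : Real.sqrt ((n : ℝ) + 1) ≤ Real.sqrt ((n : ℝ) + 2) :=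
      Real.sqrt_le_sqrt (by linarith)
    have ha2 : Real.sqrt ((n : ℝ) + 1) ^ 2 = (n : ℝ) + 1 := Real.sq_sqrt (by positivity)
    have hb2 : Real.sqrt ((n : ℝ) + 2) ^ 2 = (n : ℝ) + 2 := Real.sq_sqrt (by positivity)
    have hbpos : (0 : ℝ) < Real.sqrt ((n : ℝ) + 2) := by linarith
    have key : 1 / Real.sqrt (((n : ℕ) : ℝ) + 1 + 1) ≤
        2 * Real.sqrt ((n : ℝ) + 2) - 2 * Real.sqrt ((n : ℝ) + 1) := by
      rw [show (((n : ℕ) : ℝ) + 1 + 1) = (n : ℝ) + 2 by push_cast; ring]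
      rw [div_le_iff₀ hbpos]
      nlinarith [ha, hb, ha2, hb2]
    have := add_le_add ih key
    push_cast at this ⊢
    rw [show ((n : ℝ) + 1 + 1) = (n : ℝ) + 2 by ring] at this ⊢
    linarith

-- distance |2N - α| as a natural number
def ddist (N α : ℕ) : ℕ := (2 * N - α) + (α - 2 * N)

lemma aux_sum_dist (α : ℕ) (u : Finset ℕ) (hu : ∀ N ∈ u, N ≤ α) :
    ∑ N ∈ u, (1 / Real.sqrt ((ddist N α : ℝ) + 1)) ≤ 4 * Real.sqrt ((α : ℝ) + 1) := by
  classical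
  set g : ℕ → ℝ := fun k => 1 / Real.sqrt ((k : ℝ) + 1) with hg
  have hg0 : ∀ k, 0 ≤ g k := fun k => by positivity
  have hsum : ∀ (w : Finset ℕ) (φ : ℕ → ℕ), (∀ x ∈ w, ∀ y ∈ w, φ x = φ y → x = y) →
      (∀ N ∈ w, φ N ∈ Finset.range (α + 1)) →
      ∑ N ∈ w, g (φ N) ≤ 2 * Real.sqrt ((α : ℝ) + 1) := by
    intro w φ hinj hmaps
    rw [← Finset.sum_image hinj]
    calc ∑ k ∈ w.image φ, g k ≤ ∑ k ∈ Finset.range (α + 1), g k := by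
          apply Finset.sum_le_sum_of_subset_of_nonneg
          · intro k hk
            obtain ⟨N, hN, rfl⟩ := Finset.mem_image.mp hk
            exact hmaps N hN
          · intro k _ _; exact hg0 k
      _ ≤ 2 * Real.sqrt ((α : ℝ) + 1) := aux_sum_rsqrt α
  have hsplit := Finset.sum_filter_add_sum_filter_not u (fun N => α ≤ 2 * N)
    (fun N => g (ddist N α))
  have h1 : ∑ N ∈ u.filter (fun N => α ≤ 2 * N), g (ddist N α) ≤ 2 * Real.sqrt ((α : ℝ) + 1) := by
    apply hsum _ (fun N => ddist N α)
    · intro x hx y hy hxy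
      simp only [Finset.mem_filter] at hx hy
      unfold ddist at hxy
      omega
    · intro N hN
      simp only [Finset.mem_filter] at hN
      have := hu N hN.1
      simp only [Finset.mem_range]
      unfold ddist
      omega
  have h2 : ∑ N ∈ u.filter (fun N => ¬ α ≤ 2 * N), g (ddist N α) ≤
      2 * Real.sqrt ((α : ℝ) + 1) := by
    apply hsum _ (fun N => ddist N α)
    · intro x hx y hy hxy
      simp only [Finset.mem_filter] at hx hy
      unfold ddist at hxy
      omega
    · intro N hN
      simp only [Finset.mem_filter] at hN
      have := hu N hN.1
      simp only [Finset.mem_range]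
      unfold ddist
      omega
  calc ∑ N ∈ u, g (ddist N α)
      = _ + _ := hsplit.symm
    _ ≤ 2 * Real.sqrt ((α : ℝ) + 1) + 2 * Real.sqrt ((α : ℝ) + 1) := add_le_add h1 h2
    _ = 4 * Real.sqrt ((α : ℝ) + 1) := by ring

lemma aux_abs_eq (N α : ℕ) : |2 * (N : ℝ) - (α : ℝ)| = ((ddist N α : ℕ) : ℝ) := by
  rcases le_total α (2 * N) with h | h
  · have e : ddist N α = 2 * N - α := by unfold ddist; omega
    have hR : (α : ℝ) ≤ 2 * (N : ℝ) := by exact_mod_cast h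
    rw [e, Nat.cast_sub h, abs_of_nonneg (by linarith)]
    push_cast
    ring
  · have e : ddist N α = α - 2 * N := by unfold ddist; omega
    have hR : 2 * (N : ℝ) ≤ (α : ℝ) := by exact_mod_cast h
    rw [e, Nat.cast_sub h, abs_of_nonpos (by linarith)]
    push_cast
    ring

lemma aux_log_le (x : ℝ) (hx : 0 < x) : Real.log x ≤ 2 * Real.sqrt x := by
  have h1 : Real.log (Real.sqrt x) ≤ Real.sqrt x - 1 :=
    Real.log_le_sub_one_of_pos (Real.sqrt_pos.mpr hx)
  rw [Real.log_sqrt hx.le] at h1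
  nlinarith [Real.sqrt_nonneg x]

-- per-α bound
lemma aux_perA (c : ℝ) (hc : 0 ≤ c) (α : ℕ) (hα : 1 ≤ α) (u : Finset {N : ℕ // 1 ≤ N})
    (hu : ∀ N ∈ u, (N : ℕ) ≤ α ∧ α ≤ 3 * (N : ℕ)) :
    ∑ N ∈ u, (c / (α : ℝ)) *
        Real.log ((2 * ((N : ℕ) : ℝ) + (α : ℝ)) / (|2 * ((N : ℕ) : ℝ) - (α : ℝ)| + 1)) ≤
      24 * c := by
  classical
  have hαR : (1 : ℝ) ≤ (α : ℝ) := by exact_mod_cast hα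
  -- pointwise bound on the log
  have hlog : ∀ N ∈ u,
      Real.log ((2 * ((N : ℕ) : ℝ) + (α : ℝ)) / (|2 * ((N : ℕ) : ℝ) - (α : ℝ)| + 1)) ≤
        2 * Real.sqrt (3 * (α : ℝ)) * (1 / Real.sqrt ((ddist (N : ℕ) α : ℝ) + 1)) := by
    intro N hN
    obtain ⟨hN1, _⟩ := hu N hN
    have hNR : ((N : ℕ) : ℝ) ≤ (α : ℝ) := by exact_mod_cast hN1
    have hNpos : (1 : ℝ) ≤ ((N : ℕ) : ℝ) := by exact_mod_cast N.2
    rw [aux_abs_eq]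
    set D : ℝ := ((ddist (N : ℕ) α : ℕ) : ℝ) with hD
    have hD0 : 0 ≤ D := Nat.cast_nonneg _
    have hnum : (0 : ℝ) < 2 * ((N : ℕ) : ℝ) + (α : ℝ) := by linarith
    have hden : (0 : ℝ) < D + 1 := by linarith
    have hxpos : (0 : ℝ) < (2 * ((N : ℕ) : ℝ) + (α : ℝ)) / (D + 1) := div_pos hnum hden
    calc Real.log ((2 * ((N : ℕ) : ℝ) + (α : ℝ)) / (D + 1))
        ≤ 2 * Real.sqrt ((2 * ((N : ℕ) : ℝ) + (α : ℝ)) / (D + 1)) := aux_log_le _ hxpos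
      _ = 2 * (Real.sqrt (2 * ((N : ℕ) : ℝ) + (α : ℝ)) / Real.sqrt (D + 1)) := by
          rw [Real.sqrt_div (by linarith : (0:ℝ) ≤ 2 * ((N : ℕ) : ℝ) + (α : ℝ))]
      _ ≤ 2 * Real.sqrt (3 * (α : ℝ)) * (1 / Real.sqrt (D + 1)) := by
          have h1 : Real.sqrt (2 * ((N : ℕ) : ℝ) + (α : ℝ)) ≤ Real.sqrt (3 * (α : ℝ)) :=
            Real.sqrt_le_sqrt (by linarith)
          have h2 : 0 < Real.sqrt (D + 1) := Real.sqrt_pos.mpr hden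
          rw [mul_assoc, mul_one_div]
          gcongr
  have hα0 : (0 : ℝ) < (α : ℝ) := by linarith
  have hdist : ∑ N ∈ u, (1 / Real.sqrt ((ddist (N : ℕ) α : ℝ) + 1)) ≤
      4 * Real.sqrt ((α : ℝ) + 1) := by
    have hinj : ∀ x ∈ u, ∀ y ∈ u, ((x : ℕ) : ℕ) = ((y : ℕ) : ℕ) → x = y :=
      fun x _ y _ h => Subtype.ext h
    have him := Finset.sum_image (f := fun m : ℕ => 1 / Real.sqrt ((ddist m α : ℝ) + 1)) hinj
    rw [← him]
    apply aux_sum_dist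
    intro m hm
    obtain ⟨N, hN, rfl⟩ := Finset.mem_image.mp hm
    exact (hu N hN).1
  have hss : Real.sqrt (3 * (α : ℝ)) * Real.sqrt ((α : ℝ) + 1) ≤ 3 * (α : ℝ) := by
    rw [← Real.sqrt_mul (by positivity)]
    calc Real.sqrt (3 * (α : ℝ) * ((α : ℝ) + 1)) ≤ Real.sqrt ((3 * (α : ℝ)) ^ 2) :=
          Real.sqrt_le_sqrt (by nlinarith)
      _ = 3 * (α : ℝ) := Real.sqrt_sq (by positivity)
  calc ∑ N ∈ u, (c / (α : ℝ)) *
          Real.log ((2 * ((N : ℕ) : ℝ) + (α : ℝ)) / (|2 * ((N : ℕ) : ℝ) - (α : ℝ)| + 1))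
      ≤ ∑ N ∈ u, (c / (α : ℝ)) *
          (2 * Real.sqrt (3 * (α : ℝ)) * (1 / Real.sqrt ((ddist (N : ℕ) α : ℝ) + 1))) :=
        Finset.sum_le_sum fun N hN =>
          mul_le_mul_of_nonneg_left (hlog N hN) (by positivity)
    _ = (c / (α : ℝ) * (2 * Real.sqrt (3 * (α : ℝ)))) *
          ∑ N ∈ u, (1 / Real.sqrt ((ddist (N : ℕ) α : ℝ) + 1)) := by
        rw [Finset.mul_sum]
        apply Finset.sum_congr rfl
        intro N _
        ring
    _ ≤ (c / (α : ℝ) * (2 * Real.sqrt (3 * (α : ℝ)))) * (4 * Real.sqrt ((α : ℝ) + 1)) := by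
        apply mul_le_mul_of_nonneg_left hdist (by positivity)
    _ = 8 * (c / (α : ℝ)) * (Real.sqrt (3 * (α : ℝ)) * Real.sqrt ((α : ℝ) + 1)) := by ring
    _ ≤ 8 * (c / (α : ℝ)) * (3 * (α : ℝ)) :=
        mul_le_mul_of_nonneg_left hss (by positivity)
    _ = 24 * c := by field_simp; ring

theorem stmt_7 :
    ∃ C > 0, ∀ v : ℕ → ℝ, (∀ α, 0 ≤ v α) → Summable (fun α => v α ^ 2) →
      ∑' N : {N : ℕ // 1 ≤ N},
          ∑ α ∈ Finset.Icc (N : ℕ) (3 * (N : ℕ)),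
            (v α ^ 2 / (α : ℝ)) *
              Real.log ((2 * (N : ℝ) + (α : ℝ)) / (|2 * (N : ℝ) - (α : ℝ)| + 1)) ≤
        C * ∑' α : ℕ, v α ^ 2 := by
  classical
  refine ⟨24, by norm_num, ?_⟩
  intro v hv hsum
  have hts0 : 0 ≤ ∑' α : ℕ, v α ^ 2 := tsum_nonneg fun α => sq_nonneg _
  by_cases hS : Summable (fun N : {N : ℕ // 1 ≤ N} =>
      ∑ α ∈ Finset.Icc (N : ℕ) (3 * (N : ℕ)),
        (v α ^ 2 / (α : ℝ)) *
          Real.log ((2 * (N : ℝ) + (α : ℝ)) / (|2 * (N : ℝ) - (α : ℝ)| + 1)))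
  · refine Summable.tsum_le_of_sum_le hS ?_
    intro s
    set M : ℕ := s.sup (fun N => 3 * (N : ℕ)) with hM
    have hcomm : ∀ (N : {N : ℕ // 1 ≤ N}) (α : ℕ),
        N ∈ s ∧ α ∈ Finset.Icc (N : ℕ) (3 * (N : ℕ)) ↔
        N ∈ (s.filter (fun N : {N : ℕ // 1 ≤ N} => (N : ℕ) ≤ α ∧ α ≤ 3 * (N : ℕ))) ∧ α ∈ Finset.Icc 1 M := by
      intro N α
      simp only [Finset.mem_filter, Finset.mem_Icc]
      constructor
      · rintro ⟨hNs, h1, h2⟩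
        refine ⟨⟨hNs, h1, h2⟩, le_trans N.2 h1, le_trans h2 (Finset.le_sup (f := fun N : {N : ℕ // 1 ≤ N} => 3 * (N : ℕ)) hNs)⟩
      · rintro ⟨⟨hNs, h1, h2⟩, _⟩
        exact ⟨hNs, h1, h2⟩
    rw [Finset.sum_comm' hcomm]
    calc ∑ α ∈ Finset.Icc 1 M, ∑ N ∈ s.filter (fun N : {N : ℕ // 1 ≤ N} => (N : ℕ) ≤ α ∧ α ≤ 3 * (N : ℕ)),
            (v α ^ 2 / (α : ℝ)) *
              Real.log ((2 * (N : ℝ) + (α : ℝ)) / (|2 * (N : ℝ) - (α : ℝ)| + 1))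
        ≤ ∑ α ∈ Finset.Icc 1 M, 24 * v α ^ 2 := by
          apply Finset.sum_le_sum
          intro α hα
          exact aux_perA (v α ^ 2) (sq_nonneg _) α (Finset.mem_Icc.mp hα).1 _
            (fun N hN => (Finset.mem_filter.mp hN).2)
      _ = 24 * ∑ α ∈ Finset.Icc 1 M, v α ^ 2 := (Finset.mul_sum _ _ _).symm
      _ ≤ 24 * ∑' α : ℕ, v α ^ 2 := by
          apply mul_le_mul_of_nonneg_left _ (by norm_num)
          exact Summable.sum_le_tsum _ (fun α _ => sq_nonneg _) hsum
  · rw [tsum_eq_zero_of_not_summable hS]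
    exact mul_nonneg (by norm_num) hts0
end

section
/- Fix p ∈ (4/3, 2), let p' = p/(p-1), and let μ satisfy 1/2 < μ ≤ 2/p'. Then for every α > 1 (integer), ∑_{1 ≤ |β| < α} ( α^{μ-1}·|β| / (|αβ|^{1/p'}·(1 + |β-α|^μ)) )² ≤ C·(α^{1-4/p'} + α^{2μ-4/p'}), with C depending only on p and μ; in particular, summing against any ℓ²-bounded coefficients (‖V_α‖₂²)_α with ∑_α ‖V_α‖₂² ≤ M gives a total bounded by C'·M since the exponents 1-4/p' and 2μ-4/p' are ≤ 0. -/
/-!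
With `c = 1/p' ≤ 1` and `1 ≤ |β| ≤ α`, trading `|β|^(1-c) ≤ α^(1-c)` bounds each term by
`α^(2μ-4c) |β-α|^(-2μ)`. Since all `β < α`, the distances `α - β` are distinct positive integers,
so the sum is at most `ζ(2μ) α^(2μ-4c)`, finite because `2μ > 1`.
-/

open Real Finset

lemma rpow_sub_one_mul_div_le {a b d μ c : ℝ} (hb : 0 < b) (hba : b ≤ a) (hd : 0 < d)
    (hc : c ≤ 1) :
    a ^ (μ - 1) * b / ((a * b) ^ c * (1 + d ^ μ)) ≤ a ^ (μ - 2 * c) * d ^ (-μ) := by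
  have ha : 0 < a := hb.trans_le hba
  calc a ^ (μ - 1) * b / ((a * b) ^ c * (1 + d ^ μ))
      = a ^ (μ - 1 - c) * b ^ (1 - c) / (1 + d ^ μ) := by
        rw [mul_rpow ha.le hb.le, sub_eq_add_neg (μ - 1), rpow_add ha, rpow_neg ha.le,
          rpow_sub hb, rpow_one]
        field_simp
    _ ≤ a ^ (μ - 1 - c) * a ^ (1 - c) / d ^ μ := by
        gcongr
        exact le_add_of_nonneg_left zero_le_one
    _ = a ^ (μ - 2 * c) * d ^ (-μ) := by
        rw [← rpow_add ha, rpow_neg hd.le, div_eq_mul_inv]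
        ring_nf

lemma sq_rpow_sub_one_mul_abs_div_le {a β μ c : ℝ} (hβ : β ≠ 0) (hβa : |β| ≤ a) (hβa' : β ≠ a)
    (hc : c ≤ 1) :
    (a ^ (μ - 1) * |β| / (|a * β| ^ c * (1 + |β - a| ^ μ))) ^ 2 ≤
      a ^ (2 * μ - 4 * c) * |β - a| ^ (-(2 * μ)) := by
  have hb : 0 < |β| := abs_pos.mpr hβ
  have ha : 0 < a := hb.trans_le hβa
  have hd : 0 < |β - a| := abs_pos.mpr (sub_ne_zero.mpr hβa')
  rw [abs_mul, abs_of_pos ha]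
  calc (a ^ (μ - 1) * |β| / ((a * |β|) ^ c * (1 + |β - a| ^ μ))) ^ 2
      ≤ (a ^ (μ - 2 * c) * |β - a| ^ (-μ)) ^ 2 := by
        gcongr
        exact rpow_sub_one_mul_div_le hb hβa hd hc
    _ = a ^ (2 * μ - 4 * c) * |β - a| ^ (-(2 * μ)) := by
        rw [mul_pow, ← rpow_mul_natCast ha.le, ← rpow_mul_natCast hd.le]
        ring_nf

/-- Below `m`, the distance `|β - m|` runs injectively through the positive integers. -/
lemma sum_abs_sub_rpow_neg_le_tsum {F : Finset ℤ} {m : ℤ} (hF : ∀ β ∈ F, β < m) {s : ℝ}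
    (hs : 1 < s) :
    ∑ β ∈ F, |(β : ℝ) - m| ^ (-s) ≤ ∑' n : ℕ, (n : ℝ) ^ (-s) := by
  have hinj : Set.InjOn (fun β => (β - m).natAbs) F := fun x hx y hy h => by
    have := hF x hx
    have := hF y hy
    simp only at h
    omega
  calc ∑ β ∈ F, |(β : ℝ) - m| ^ (-s)
      = ∑ n ∈ F.image (fun β => (β - m).natAbs), (n : ℝ) ^ (-s) := by
        rw [sum_image hinj]
        push_cast [Nat.cast_natAbs]
        rfl
    _ ≤ ∑' n : ℕ, (n : ℝ) ^ (-s) :=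
        (summable_nat_rpow.mpr (by linarith)).sum_le_tsum _ fun n _ => by positivity

theorem stmt_11_general (p : ℝ) (hp : 4 / 3 < p) (p' : ℝ) (hp' : p' = p / (p - 1))
    (μ : ℝ) (hμ : 1 / 2 < μ) (hμ2 : μ ≤ 2 / p') :
    (1 - 4 / p' ≤ 0 ∧ 2 * μ - 4 / p' ≤ 0) ∧
    ∃ C > 0, ∀ α : ℕ, 1 < α →
      ∑ β ∈ (Finset.Ioo (-(α : ℤ)) (α : ℤ)).filter (· ≠ 0),
          ((α : ℝ) ^ (μ - 1) * |(β : ℝ)| /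
            (|(α : ℝ) * (β : ℝ)| ^ (1 / p') * (1 + |(β : ℝ) - (α : ℝ)| ^ μ))) ^ 2 ≤
        C * ((α : ℝ) ^ (1 - 4 / p') + (α : ℝ) ^ (2 * μ - 4 / p')) := by
  have hc : 1 / p' = (p - 1) / p := by rw [hp', one_div_div]
  have hc1 : 1 / p' ≤ 1 := by rw [hc, div_le_one (by linarith)]; linarith
  have hc4 : 1 / 4 ≤ 1 / p' := by rw [hc, le_div_iff₀ (by linarith)]; linarith
  have h4 : 4 / p' = 4 * (1 / p') := by ring
  have h2 : 2 / p' = 2 * (1 / p') := by ring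
  refine ⟨⟨by linarith, by linarith⟩, ?_⟩
  set S := ∑' n : ℕ, (n : ℝ) ^ (-(2 * μ))
  have hS : 0 < S :=
    (summable_nat_rpow.mpr (by linarith)).tsum_pos (fun n => by positivity) 1 (by simp)
  refine ⟨S, hS, fun α _ => ?_⟩
  set F := (Finset.Ioo (-(α : ℤ)) (α : ℤ)).filter (· ≠ 0)
  have hF : ∀ β ∈ F, β < α := fun β hβ => (mem_Ioo.mp (mem_filter.mp hβ).1).2
  have hterm : ∀ β ∈ F, ((α : ℝ) ^ (μ - 1) * |(β : ℝ)| /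
      (|(α : ℝ) * (β : ℝ)| ^ (1 / p') * (1 + |(β : ℝ) - (α : ℝ)| ^ μ))) ^ 2 ≤
      (α : ℝ) ^ (2 * μ - 4 / p') * |(β : ℝ) - α| ^ (-(2 * μ)) := by
    intro β hβ
    obtain ⟨hβI, hβ0⟩ := mem_filter.mp hβ
    obtain ⟨hβl, hβr⟩ := mem_Ioo.mp hβI
    rw [h4]
    refine sq_rpow_sub_one_mul_abs_div_le (by exact_mod_cast hβ0) ?_ ?_ hc1
    · exact_mod_cast abs_le.mpr ⟨hβl.le, hβr.le⟩
    · exact_mod_cast hβr.ne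
  have hlattice := sum_abs_sub_rpow_neg_le_tsum hF (s := 2 * μ) (by linarith)
  push_cast at hlattice
  calc _ ≤ ∑ β ∈ F, (α : ℝ) ^ (2 * μ - 4 / p') * |(β : ℝ) - α| ^ (-(2 * μ)) := sum_le_sum hterm
    _ = (α : ℝ) ^ (2 * μ - 4 / p') * ∑ β ∈ F, |(β : ℝ) - α| ^ (-(2 * μ)) := (mul_sum ..).symm
    _ ≤ (α : ℝ) ^ (2 * μ - 4 / p') * S := by gcongr
    _ ≤ S * ((α : ℝ) ^ (1 - 4 / p') + (α : ℝ) ^ (2 * μ - 4 / p')) := by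
        nlinarith [rpow_nonneg (Nat.cast_nonneg α) (1 - 4 / p')]

theorem stmt_11 (p : ℝ) (hp : 4 / 3 < p) (hp2 : p < 2) (p' : ℝ) (hp' : p' = p / (p - 1))
    (μ : ℝ) (hμ : 1 / 2 < μ) (hμ2 : μ ≤ 2 / p') :
    (1 - 4 / p' ≤ 0 ∧ 2 * μ - 4 / p' ≤ 0) ∧
    ∃ C > 0, ∀ α : ℕ, 1 < α →
      ∑ β ∈ (Finset.Ioo (-(α : ℤ)) (α : ℤ)).filter (· ≠ 0),
          ((α : ℝ) ^ (μ - 1) * |(β : ℝ)| /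
            (|(α : ℝ) * (β : ℝ)| ^ (1 / p') * (1 + |(β : ℝ) - (α : ℝ)| ^ μ))) ^ 2 ≤
        C * ((α : ℝ) ^ (1 - 4 / p') + (α : ℝ) ^ (2 * μ - 4 / p')) :=
  stmt_11_general p hp p' hp' μ hμ hμ2
end
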